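/- Under the noise model Y = f(X) + ε, suppose the model is unbiased, i.e., m(x) = f(x) for all x ∈ S×C, that for each x the map ω_F ↦ f̂(ω_F, x) is square-integrable with respect to P_F, and that all integrands below are integrable with respect to P ⊗ P_F. Then the deviation of the expected L2-loss PFI over the model distribution from the DGP-PFI equals the variance inflation term: ∫∫ [(Y − f̂(ω_F,(X̃_S,X_C)))² − (Y − f̂(ω_F,X))²] d(P⊗P_F) − E[(f(X) − f(X̃_S,X_C))²] = E[v(X̃_S, X_C)] − E[v(X_S, X_C)]. In particular, if (X̃_S, X_C) has the same joint law as (X_S, X_C) (e.g., for marginal sampling when X̃_S has the law of X_S, is independent of X_C, and X_S is independent of X_C), the expected PFI equals the DGP-PFI. -/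

import Mathlib

/-!
Averaging the squared loss over the learner's randomness splits it, point by point, into the
squared loss of the mean model plus the model variance at the input (bias–variance). For an
unbiased model the mean model is `f`, so the expected PFI is the PFI of `f` plus
`E[v(X̃_S, X_C)] − E[v(X_S, X_C)]`. The PFI of `f` itself is the DGP-PFI: with
`Y − f(X̃_S, X_C) = (f(X) − f(X̃_S, X_C)) + ε`, the cross term vanishes because `ε` is centred and
independent of the features, and the noise contributions `E[ε²]` cancel. When `(X̃_S, X_C)` and
`X` have the same law, the two variance terms coincide.
-/

open MeasureTheory ProbabilityTheory

section

variable {Ω ΩF α : Type*} [MeasurableSpace Ω] [MeasurableSpace ΩF]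

lemma integral_const_sub_sq {μ : Measure ΩF} [IsProbabilityMeasure μ] {g : ΩF → ℝ}
    (hg : MemLp g 2 μ) (b : ℝ) :
    ∫ ω, (b - g ω) ^ 2 ∂μ = (b - μ[g]) ^ 2 + Var[g; μ] := by
  have h := variance_eq_sub (X := fun ω => b - g ω) ((memLp_const b).sub hg)
  rw [variance_const_sub hg.aestronglyMeasurable,
    integral_sub (integrable_const b) (hg.integrable one_le_two), integral_const] at h
  simp only [Pi.pow_apply, probReal_univ, smul_eq_mul, one_mul] at h
  linarith

lemma ProbabilityTheory.IndepFun.integral_add_sq_of_integral_eq_zero {μ : Measure Ω}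
    [IsFiniteMeasure μ] {Z ε : Ω → ℝ} (hZ : MemLp Z 2 μ) (hε : MemLp ε 2 μ)
    (hind : IndepFun Z ε μ) (hε0 : μ[ε] = 0) :
    ∫ ω, (Z ω + ε ω) ^ 2 ∂μ = ∫ ω, Z ω ^ 2 ∂μ + ∫ ω, ε ω ^ 2 ∂μ := by
  have hZi := hZ.integrable one_le_two
  have hεi := hε.integrable one_le_two
  have hcross : ∫ ω, Z ω * ε ω ∂μ = 0 := by
    rw [hind.integral_fun_mul_eq_mul_integral hZi.aestronglyMeasurable hεi.aestronglyMeasurable,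
      hε0, mul_zero]
  have hcross_int : Integrable (fun ω => 2 * (Z ω * ε ω)) μ :=
    (hind.integrable_mul hZi hεi).const_mul 2
  have hrest_int : Integrable (fun ω => 2 * (Z ω * ε ω) + ε ω ^ 2) μ :=
    hcross_int.add hε.integrable_sq
  calc ∫ ω, (Z ω + ε ω) ^ 2 ∂μ = ∫ ω, Z ω ^ 2 + (2 * (Z ω * ε ω) + ε ω ^ 2) ∂μ := by
        congr 1; funext ω; ring
    _ = ∫ ω, Z ω ^ 2 ∂μ + ∫ ω, ε ω ^ 2 ∂μ := by
        rw [integral_add hZ.integrable_sq hrest_int, integral_add hcross_int hε.integrable_sq,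
          integral_const_mul, hcross, mul_zero, zero_add]

variable {F : ΩF × α → ℝ} {m v : α → ℝ}

lemma integral_const_sub_sq_eq_add_of_mean_of_variance {ν : Measure ΩF} [IsProbabilityMeasure ν]
    (hF : ∀ x, MemLp (fun ω => F (ω, x)) 2 ν)
    (hm : ∀ x, m x = ∫ ω, F (ω, x) ∂ν) (hv : ∀ x, v x = ∫ ω, (F (ω, x) - m x) ^ 2 ∂ν)
    (b : ℝ) (x : α) :
    ∫ ω, (b - F (ω, x)) ^ 2 ∂ν = (b - m x) ^ 2 + v x := by
  rw [integral_const_sub_sq (hF x), variance_eq_integral (hF x).aemeasurable, hv x, hm x]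

lemma integral_prod_sq_sub_eq_add_of_mean_of_variance {P : Measure Ω} [SFinite P]
    {ν : Measure ΩF} [IsProbabilityMeasure ν] (hF : ∀ x, MemLp (fun ω => F (ω, x)) 2 ν)
    (hm : ∀ x, m x = ∫ ω, F (ω, x) ∂ν) (hv : ∀ x, v x = ∫ ω, (F (ω, x) - m x) ^ 2 ∂ν)
    {X : Ω → α} {Y : Ω → ℝ}
    (hint : Integrable (fun p : Ω × ΩF => (Y p.1 - F (p.2, X p.1)) ^ 2) (P.prod ν))
    (hloss : Integrable (fun ω => (Y ω - m (X ω)) ^ 2) P)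
    (hvX : Integrable (fun ω => v (X ω)) P) :
    ∫ p : Ω × ΩF, (Y p.1 - F (p.2, X p.1)) ^ 2 ∂(P.prod ν)
      = ∫ ω, (Y ω - m (X ω)) ^ 2 ∂P + ∫ ω, v (X ω) ∂P := by
  rw [integral_prod _ hint, ← integral_add hloss hvX]
  exact integral_congr_ae (Filter.Eventually.of_forall fun ω =>
    integral_const_sub_sq_eq_add_of_mean_of_variance hF hm hv (Y ω) (X ω))

lemma stronglyMeasurable_of_mean_of_variance [MeasurableSpace α] {ν : Measure ΩF} [SFinite ν]
    (hF : Measurable F)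
    (hm : ∀ x, m x = ∫ ω, F (ω, x) ∂ν) (hv : ∀ x, v x = ∫ ω, (F (ω, x) - m x) ^ 2 ∂ν) :
    StronglyMeasurable v := by
  have hmeas : StronglyMeasurable m := by
    rw [funext hm]
    exact hF.stronglyMeasurable.integral_prod_left'
  rw [funext hv]
  exact ((hF.stronglyMeasurable.sub (hmeas.comp_measurable measurable_snd)).pow 2)
    |>.integral_prod_left'

end

theorem stmt_11_general
    {Ω S C ΩF : Type*} [MeasurableSpace Ω] [MeasurableSpace S] [MeasurableSpace C]
    [MeasurableSpace ΩF]
    (P : Measure Ω) [IsProbabilityMeasure P]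
    (PF : Measure ΩF) [IsProbabilityMeasure PF]
    (XS : Ω → S) (XC : Ω → C) (XtS : Ω → S) (Y : Ω → ℝ) (ε : Ω → ℝ)
    (hXS : Measurable XS) (hXC : Measurable XC) (hXtS : Measurable XtS)
    (f : S × C → ℝ) (hf : Measurable f)
    (hDGP : ∀ ω, Y ω = f (XS ω, XC ω) + ε ω)
    (hIndep : IndepFun ε (fun ω => (XS ω, XC ω, XtS ω)) P)
    (hε2 : MemLp ε 2 P)
    (hεmean : ∫ ω, ε ω ∂P = 0)
    (fhat : ΩF × (S × C) → ℝ) (hfhat : Measurable fhat)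
    (hfhat2 : ∀ x : S × C, MemLp (fun ωF => fhat (ωF, x)) 2 PF)
    (m v : S × C → ℝ)
    (hm : ∀ x, m x = ∫ ωF, fhat (ωF, x) ∂PF)
    (hv : ∀ x, v x = ∫ ωF, (fhat (ωF, x) - m x) ^ 2 ∂PF)
    (hUnbiased : ∀ x : S × C, m x = f x)
    (hIntPerm : Integrable (fun p : Ω × ΩF =>
      (Y p.1 - fhat (p.2, (XtS p.1, XC p.1))) ^ 2) (P.prod PF))
    (hIntOrig : Integrable (fun p : Ω × ΩF =>
      (Y p.1 - fhat (p.2, (XS p.1, XC p.1))) ^ 2) (P.prod PF))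
    (hfX2 : MemLp (fun ω => f (XS ω, XC ω)) 2 P)
    (hfXt2 : MemLp (fun ω => f (XtS ω, XC ω)) 2 P)
    (hIntVarPerm : Integrable (fun ω => v (XtS ω, XC ω)) P)
    (hIntVarOrig : Integrable (fun ω => v (XS ω, XC ω)) P) :
    (∫ p : Ω × ΩF, ((Y p.1 - fhat (p.2, (XtS p.1, XC p.1))) ^ 2
          - (Y p.1 - fhat (p.2, (XS p.1, XC p.1))) ^ 2) ∂(P.prod PF))
        - (∫ ω, (f (XS ω, XC ω) - f (XtS ω, XC ω)) ^ 2 ∂P)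
      = (∫ ω, v (XtS ω, XC ω) ∂P) - ∫ ω, v (XS ω, XC ω) ∂P
    ∧ (Measure.map (fun ω => (XtS ω, XC ω)) P = Measure.map (fun ω => (XS ω, XC ω)) P →
        (∫ p : Ω × ΩF, ((Y p.1 - fhat (p.2, (XtS p.1, XC p.1))) ^ 2
            - (Y p.1 - fhat (p.2, (XS p.1, XC p.1))) ^ 2) ∂(P.prod PF))
          = ∫ ω, (f (XS ω, XC ω) - f (XtS ω, XC ω)) ^ 2 ∂P) := by
  have hmf : ∀ x, f x = ∫ ωF, fhat (ωF, x) ∂PF := fun x => hUnbiased x ▸ hm x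
  have hvf : ∀ x, v x = ∫ ωF, (fhat (ωF, x) - f x) ^ 2 ∂PF := fun x => hUnbiased x ▸ hv x
  set Z := fun ω => f (XS ω, XC ω) - f (XtS ω, XC ω)
  have hZ : MemLp Z 2 P := hfX2.sub hfXt2
  have hresPerm : ∀ ω, Y ω - f (XtS ω, XC ω) = Z ω + ε ω := fun ω => by rw [hDGP ω]; ring
  have hresOrig : ∀ ω, Y ω - f (XS ω, XC ω) = ε ω := fun ω => by rw [hDGP ω]; ring
  have hZε : IndepFun Z ε P :=
    (hIndep.comp measurable_id (ψ := fun q : S × C × S => f (q.1, q.2.1) - f (q.2.2, q.2.1))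
      (by fun_prop)).symm
  have hPerm := integral_prod_sq_sub_eq_add_of_mean_of_variance hfhat2 hmf hvf hIntPerm
    (by simpa only [hresPerm, Pi.add_apply] using (hZ.add hε2).integrable_sq) hIntVarPerm
  have hOrig := integral_prod_sq_sub_eq_add_of_mean_of_variance hfhat2 hmf hvf hIntOrig
    (by simpa only [hresOrig] using hε2.integrable_sq) hIntVarOrig
  simp only [hresPerm, hresOrig, hZε.integral_add_sq_of_integral_eq_zero hZ hε2 hεmean]
    at hPerm hOrig
  rw [integral_sub hIntPerm hIntOrig, hPerm, hOrig]
  refine ⟨by ring, fun hlaw => ?_⟩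
  have hvmeas := stronglyMeasurable_of_mean_of_variance hfhat hmf hvf
  have hvlaw : ∫ ω, v (XtS ω, XC ω) ∂P = ∫ ω, v (XS ω, XC ω) ∂P := by
    rw [← integral_map (hXtS.prodMk hXC).aemeasurable hvmeas.aestronglyMeasurable,
      ← integral_map (hXS.prodMk hXC).aemeasurable hvmeas.aestronglyMeasurable, hlaw]
  rw [hvlaw]
  ring

/-- **Variance inflation of the PFI for unbiased models (L2 loss).** Under the noise model
`Y = f(X) + ε`, if the model is unbiased (`m = f`), `f̂(·, x)` is square-integrable, and all
integrands are integrable, then the deviation of the expected L2-loss PFI over the model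
distribution from the DGP-PFI equals the variance inflation term:
`∫∫ [(Y − f̂(ω_F,(X̃_S,X_C)))² − (Y − f̂(ω_F,X))²] d(P⊗P_F) − E[(f(X) − f(X̃_S,X_C))²]
  = E[v(X̃_S, X_C)] − E[v(X_S, X_C)]`.
In particular, if `(X̃_S, X_C)` has the same joint law as `(X_S, X_C)`, the expected PFI
equals the DGP-PFI. -/
theorem stmt_11
    {Ω S C ΩF : Type*} [MeasurableSpace Ω] [MeasurableSpace S] [MeasurableSpace C]
    [MeasurableSpace ΩF]
    (P : Measure Ω) [IsProbabilityMeasure P]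
    (PF : Measure ΩF) [IsProbabilityMeasure PF]
    (XS : Ω → S) (XC : Ω → C) (XtS : Ω → S) (Y : Ω → ℝ) (ε : Ω → ℝ)
    (hXS : Measurable XS) (hXC : Measurable XC) (hXtS : Measurable XtS)
    (hε : Measurable ε)
    (f : S × C → ℝ) (hf : Measurable f)
    (hDGP : ∀ ω, Y ω = f (XS ω, XC ω) + ε ω)
    (hIndep : IndepFun ε (fun ω => (XS ω, XC ω, XtS ω)) P)
    (hε2 : MemLp ε 2 P)
    (hεmean : ∫ ω, ε ω ∂P = 0)
    (σ : ℝ) (hεvar : variance ε P = σ ^ 2)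
    (fhat : ΩF × (S × C) → ℝ) (hfhat : Measurable fhat)
    (hfhat2 : ∀ x : S × C, MemLp (fun ωF => fhat (ωF, x)) 2 PF)
    (m v : S × C → ℝ)
    (hm : ∀ x, m x = ∫ ωF, fhat (ωF, x) ∂PF)
    (hv : ∀ x, v x = ∫ ωF, (fhat (ωF, x) - m x) ^ 2 ∂PF)
    (hUnbiased : ∀ x : S × C, m x = f x)
    (hIntPerm : Integrable (fun p : Ω × ΩF =>
      (Y p.1 - fhat (p.2, (XtS p.1, XC p.1))) ^ 2) (P.prod PF))
    (hIntOrig : Integrable (fun p : Ω × ΩF =>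
      (Y p.1 - fhat (p.2, (XS p.1, XC p.1))) ^ 2) (P.prod PF))
    (hfX2 : MemLp (fun ω => f (XS ω, XC ω)) 2 P)
    (hfXt2 : MemLp (fun ω => f (XtS ω, XC ω)) 2 P)
    (hIntVarPerm : Integrable (fun ω => v (XtS ω, XC ω)) P)
    (hIntVarOrig : Integrable (fun ω => v (XS ω, XC ω)) P) :
    (∫ p : Ω × ΩF, ((Y p.1 - fhat (p.2, (XtS p.1, XC p.1))) ^ 2
          - (Y p.1 - fhat (p.2, (XS p.1, XC p.1))) ^ 2) ∂(P.prod PF))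
        - (∫ ω, (f (XS ω, XC ω) - f (XtS ω, XC ω)) ^ 2 ∂P)
      = (∫ ω, v (XtS ω, XC ω) ∂P) - ∫ ω, v (XS ω, XC ω) ∂P
    ∧ (Measure.map (fun ω => (XtS ω, XC ω)) P = Measure.map (fun ω => (XS ω, XC ω)) P →
        (∫ p : Ω × ΩF, ((Y p.1 - fhat (p.2, (XtS p.1, XC p.1))) ^ 2
            - (Y p.1 - fhat (p.2, (XS p.1, XC p.1))) ^ 2) ∂(P.prod PF))
          = ∫ ω, (f (XS ω, XC ω) - f (XtS ω, XC ω)) ^ 2 ∂P) :=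
  stmt_11_general P PF XS XC XtS Y ε hXS hXC hXtS f hf hDGP hIndep hε2 hεmean fhat hfhat hfhat2 m v
    hm hv hUnbiased hIntPerm hIntOrig hfX2 hfXt2 hIntVarPerm hIntVarOrig
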